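/- Let i be an agent (doctor or hospital) with an antisymmetric, transitive and complete preference over the allocations contained in X_i whose choice set operator C_i satisfies substitutability. Then for all X, Y ⊆ 𝐗, C_i(X ∪ Y) = C_i(C_i(X) ∪ Y). -/
import Mathlib


set_option linter.unusedSectionVars false

namespace Matching

open Finset

variable {D X : Type*} [DecidableEq D] [DecidableEq X] [Fintype X]

/-- `A(Y)` : the allocations contained in `Y`, i.e. the subsets of `Y` in which distinct
contracts involve distinct doctors, where `xD` assigns to each contract its doctor. -/
def allocs (xD : X → D) (Y : Finset X) : Finset (Finset X) :=
  Y.powerset.filter fun Z => ∀ x ∈ Z, ∀ y ∈ Z, xD x = xD y → x = y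

lemma empty_mem_allocs (xD : X → D) (Y : Finset X) : ∅ ∈ allocs xD Y := by
  simp [allocs]

/-- `C_i(Y)` : the choice set of an agent `i` (a doctor or a hospital), where `mine x`
says that contract `x` involves agent `i`, and `pr` is `i`'s antisymmetric, transitive
and complete preference, modelled as a linear order on sets of contracts (only its
comparisons between allocations of contracts involving `i` matter):
the `pr`-maximum element of `A(Y_i)`. -/
def choiceSet (xD : X → D) (mine : X → Prop) [DecidablePred mine]
    (pr : LinearOrder (Finset X)) (Y : Finset X) : Finset X :=
  @Finset.max' _ pr (allocs xD (Y.filter mine)) ⟨∅, empty_mem_allocs xD _⟩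



lemma mem_allocs {xD : X → D} {Y Z : Finset X} :
    Z ∈ allocs xD Y ↔ Z ⊆ Y ∧ ∀ x ∈ Z, ∀ y ∈ Z, xD x = xD y → x = y := by
  simp [allocs, Finset.mem_filter, Finset.mem_powerset]

lemma allocs_mono {xD : X → D} {Y Y' : Finset X} (h : Y ⊆ Y') :
    allocs xD Y ⊆ allocs xD Y' := by
  intro Z hZ
  rw [mem_allocs] at hZ ⊢
  exact ⟨hZ.1.trans h, hZ.2⟩

lemma choiceSet_mem_allocs (xD : X → D) (mine : X → Prop) [DecidablePred mine]
    (pr : LinearOrder (Finset X)) (Y : Finset X) :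
    choiceSet xD mine pr Y ∈ allocs xD (Y.filter mine) :=
  @Finset.max'_mem _ pr _ _

lemma le_choiceSet (xD : X → D) (mine : X → Prop) [DecidablePred mine]
    (pr : LinearOrder (Finset X)) (Y : Finset X) {Z : Finset X}
    (hZ : Z ∈ allocs xD (Y.filter mine)) :
    pr.le Z (choiceSet xD mine pr Y) :=
  @Finset.le_max' _ pr _ _ hZ

/-- If agent `i`'s preference is substitutable (`x ∈ C_i(W)` and `x ∈ Y_i ⊆ W_i ⊆ 𝐗`
imply `x ∈ C_i(Y)`), then `C_i(X ∪ Y) = C_i(C_i(X) ∪ Y)` for all `X, Y ⊆ 𝐗`. -/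
theorem choiceSet_union_choiceSet
    (xD : X → D) (mine : X → Prop) [DecidablePred mine] (pr : LinearOrder (Finset X))
    (hsub : ∀ W Y : Finset X, Y.filter mine ⊆ W.filter mine →
      ∀ x ∈ Y.filter mine, x ∈ choiceSet xD mine pr W → x ∈ choiceSet xD mine pr Y) :
    ∀ Xs Y : Finset X,
      choiceSet xD mine pr (Xs ∪ Y) =
        choiceSet xD mine pr (choiceSet xD mine pr Xs ∪ Y) := by
  intro Xs Y
  set A := choiceSet xD mine pr (Xs ∪ Y) with hA
  set B := choiceSet xD mine pr (choiceSet xD mine pr Xs ∪ Y) with hB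
  have hAmem := choiceSet_mem_allocs xD mine pr (Xs ∪ Y)
  have hBmem := choiceSet_mem_allocs xD mine pr (choiceSet xD mine pr Xs ∪ Y)
  rw [mem_allocs] at hAmem hBmem
  have hCXs : choiceSet xD mine pr Xs ⊆ Xs.filter mine :=
    (mem_allocs.mp (choiceSet_mem_allocs xD mine pr Xs)).1
  -- (C(Xs) ∪ Y).filter mine ⊆ (Xs ∪ Y).filter mine
  have hsub1 : (choiceSet xD mine pr Xs ∪ Y).filter mine ⊆ (Xs ∪ Y).filter mine := by
    intro x hx
    rw [Finset.mem_filter, Finset.mem_union] at hx ⊢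
    refine ⟨?_, hx.2⟩
    rcases hx.1 with h | h
    · exact Or.inl (Finset.mem_of_mem_filter x (hCXs h))
    · exact Or.inr h
  -- A ⊆ (C(Xs) ∪ Y).filter mine
  have hAsub : A ⊆ (choiceSet xD mine pr Xs ∪ Y).filter mine := by
    intro x hx
    have hx' := hAmem.1 hx
    rw [Finset.mem_filter, Finset.mem_union] at hx'
    rw [Finset.mem_filter, Finset.mem_union]
    refine ⟨?_, hx'.2⟩
    rcases hx'.1 with h | h
    · refine Or.inl (hsub (Xs ∪ Y) Xs (Finset.filter_subset_filter _ Finset.subset_union_left)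
        x ?_ hx)
      exact Finset.mem_filter.mpr ⟨h, hx'.2⟩
    · exact Or.inr h
  have hA_in : A ∈ allocs xD ((choiceSet xD mine pr Xs ∪ Y).filter mine) :=
    mem_allocs.mpr ⟨hAsub, hAmem.2⟩
  have hB_in : B ∈ allocs xD ((Xs ∪ Y).filter mine) :=
    mem_allocs.mpr ⟨hBmem.1.trans hsub1, hBmem.2⟩
  have h1 : pr.le A B := le_choiceSet xD mine pr _ hA_in
  have h2 : pr.le B A := le_choiceSet xD mine pr _ hB_in
  exact pr.le_antisymm A B h1 h2

end Matching
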